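/- The function 𝓔(x) = φ(x)/Φ̄(x) satisfies, for all x ∈ ℝ: (a) max{0,x} < 𝓔(x) < 1 + |x|; (b) 𝓔′(x) = 𝓔(x)(𝓔(x) − x) and 𝓔′(x) ∈ (0,1); (c) 𝓔″(x) = 𝓔(x)·[(2𝓔(x) − x)(𝓔(x) − x) − 1] and 𝓔″(x) ∈ (0,1); (d) 𝓔‴(x) = −2(1 − 𝓔′(x))𝓔′(x) + (2𝓔(x) − x)𝓔″(x) and 𝓔‴(x) ∈ (−1/2, 13). -/

import Mathlib

open MeasureTheory Real Set Filter

noncomputable section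

/-- The standard gaussian density `φ(x) = exp(-x²/2)/√(2π)`. -/
def gphi (x : ℝ) : ℝ := Real.exp (-x ^ 2 / 2) / Real.sqrt (2 * Real.pi)

/-- The complementary gaussian distribution function `Φ̄(x) = ∫_x^∞ φ(u) du`. -/
def Phibar (x : ℝ) : ℝ := ∫ u in Set.Ioi x, gphi u

/-- `𝓔(x) = φ(x) / Φ̄(x)`. -/
def gaussE (x : ℝ) : ℝ := gphi x / Phibar x

/-- `F_q(x) = 𝓔((κ - x)/√(1-q)) / √(1-q)` (with threshold `κ`). -/
def Fq (κ q x : ℝ) : ℝ := gaussE ((κ - x) / Real.sqrt (1 - q)) / Real.sqrt (1 - q)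

/-- `P(ψ) = ∫ tanh(√ψ z)² φ(z) dz`. -/
def Pfun (ψ : ℝ) : ℝ := ∫ z : ℝ, Real.tanh (Real.sqrt ψ * z) ^ 2 * gphi z

/-- `R_κ(q, α) = α ∫ F_q(√q z)² φ(z) dz`. -/
def Rfun (κ q α : ℝ) : ℝ := α * ∫ z : ℝ, Fq κ q (Real.sqrt q * z) ^ 2 * gphi z

/-- `𝒢_κ(α, q, ψ)`. -/
def Gfun (κ α q ψ : ℝ) : ℝ :=
  -(ψ * (1 - q)) / 2 + (∫ z : ℝ, Real.log (2 * Real.cosh (Real.sqrt ψ * z)) * gphi z)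
    + α * ∫ z : ℝ, Real.log (Phibar ((κ - Real.sqrt q * z) / Real.sqrt (1 - q))) * gphi z

def alphaLB : ℝ := 0.833078599
def alphaUB : ℝ := 0.833078600
def qLB : ℝ := 0.56394907949
def qLU : ℝ := 0.56394907950
def qUL : ℝ := 0.56394908029
def qUB : ℝ := 0.56394908030
def psiLB : ℝ := 2.5763513100
def psiLU : ℝ := 2.5763513103
def psiUL : ℝ := 2.5763513221
def psiUB : ℝ := 2.5763513224

/-!
From `Φ̄' = -φ` and `φ' = -xφ` one gets the Riccati equation `𝓔' = 𝓔(𝓔 - x)`, and the formulas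
for `𝓔''`, `𝓔'''` follow by differentiating it, so every bound is a statement about `𝓔(x)`.
If `r' - y r + 1` has a constant sign on `[x, ∞)` and `r` stays bounded, then `r φ - Φ̄` is
monotone there and tends to `0`, which compares `Φ̄` with `r φ`. Taking for `r` Birnbaum's
`(√(x² + 4) - x)/2` and Boyd's `4/(3x + √(x² + 8))` (roots of `e(e - x) = 1` and, after
inversion, of `(2e - x)(e - x) = 1`) gives `𝓔(𝓔 - x) < 1 < (2𝓔 - x)(𝓔 - x)`. This yields
`0 < 𝓔' < 1`, `0 < 𝓔''` and, for `x ≥ 0`, `𝓔'' < 𝓔 - x < 1`. For `x ≤ 0` the Gaussian decay is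
needed: `Φ̄(x) ≥ 1/2 - xφ(x)` and `e^{x²/2} ≥ 1 + x²/2 + x⁴/8` bound `𝓔` by the inverse of a
polynomial, after which the bounds on `𝓔''` and `(2𝓔 - x)𝓔''` are polynomial inequalities.
-/

open Topology Asymptotics

lemma gphi_pos (x : ℝ) : 0 < gphi x := by
  unfold gphi; positivity

lemma continuous_gphi : Continuous gphi := by
  unfold gphi; fun_prop

lemma hasDerivAt_gphi (x : ℝ) : HasDerivAt gphi (-x * gphi x) x := by
  have h : HasDerivAt (fun y => exp (-y ^ 2 / 2) / √(2 * π)) _ x :=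
    (((hasDerivAt_pow 2 x).neg.div_const 2).exp).div_const (√(2 * π))
  exact h.congr_deriv (by simp only [gphi, Pi.neg_apply]; ring)

lemma gphi_eq : gphi = fun x => exp (-(1 / 2) * x ^ 2) / √(2 * π) := by
  ext x; unfold gphi; ring_nf

lemma integrable_gphi : Integrable gphi := by
  rw [gphi_eq]
  exact (integrable_exp_neg_mul_sq (by norm_num)).div_const _

lemma tendsto_gphi_atTop : Tendsto gphi atTop (𝓝 0) := by
  have h : Tendsto (fun x : ℝ => -(1 / 2) * x ^ 2) atTop atBot :=
    (tendsto_pow_atTop two_ne_zero).const_mul_atTop_of_neg (by norm_num)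
  rw [gphi_eq, ← zero_div (√(2 * π))]
  exact (tendsto_exp_atBot.comp h).div_const _

lemma taylor_mul_gphi_le_one (x : ℝ) : 5 / 2 * (1 + x ^ 2 / 2 + x ^ 4 / 8) * gphi x ≤ 1 := by
  have hexp : 1 + x ^ 2 / 2 + x ^ 4 / 8 ≤ exp (x ^ 2 / 2) := by
    convert quadratic_le_exp_of_nonneg (by positivity : 0 ≤ x ^ 2 / 2) using 1; ring
  have hsqrt : 5 / 2 ≤ √(2 * π) :=
    le_sqrt_of_sq_le (by nlinarith [pi_gt_d2])
  have hmul : exp (x ^ 2 / 2) * exp (-x ^ 2 / 2) = 1 := by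
    rw [← exp_add]; ring_nf; exact exp_zero
  unfold gphi
  rw [← mul_div_assoc, div_le_one (by positivity)]
  calc 5 / 2 * (1 + x ^ 2 / 2 + x ^ 4 / 8) * exp (-x ^ 2 / 2)
      ≤ √(2 * π) * exp (x ^ 2 / 2) * exp (-x ^ 2 / 2) := by gcongr
    _ = √(2 * π) := by rw [mul_assoc, hmul, mul_one]

lemma Phibar_eq_sub_intervalIntegral (y : ℝ) : Phibar y = Phibar 0 - ∫ t in (0 : ℝ)..y, gphi t := by
  have hsplit (z : ℝ) : Phibar z = (∫ u, gphi u) - ∫ u in Iic z, gphi u := by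
    have := integral_add_compl (measurableSet_Iic (a := z)) integrable_gphi
    rw [compl_Iic] at this
    unfold Phibar; linarith
  rw [hsplit y, hsplit 0, ← intervalIntegral.integral_Iic_sub_Iic integrable_gphi.integrableOn
    integrable_gphi.integrableOn]
  ring

lemma hasDerivAt_Phibar (x : ℝ) : HasDerivAt Phibar (-gphi x) x := by
  have h := ((continuous_gphi.integral_hasStrictDerivAt 0 x).hasDerivAt).const_sub (Phibar 0)
  exact h.congr_of_eventuallyEq (Eventually.of_forall Phibar_eq_sub_intervalIntegral)

lemma Phibar_pos (x : ℝ) : 0 < Phibar x := by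
  unfold Phibar
  rw [setIntegral_pos_iff_support_of_nonneg_ae (Eventually.of_forall fun u => (gphi_pos u).le)
    integrable_gphi.integrableOn]
  have hs : Function.support gphi ∩ Ioi x = Ioi x := by
    ext u; simp [Function.mem_support, (gphi_pos u).ne']
  simp [hs]

lemma tendsto_Phibar_atTop : Tendsto Phibar atTop (𝓝 0) := by
  have h := (intervalIntegral_tendsto_integral_Ioi 0 integrable_gphi.integrableOn
    tendsto_id).const_sub (Phibar 0)
  rw [← Phibar, sub_self] at h
  exact h.congr fun y => (Phibar_eq_sub_intervalIntegral y).symm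

lemma Phibar_zero : Phibar 0 = 1 / 2 := by
  have hπ : π / (1 / 2) = 2 * π := by ring
  simp only [Phibar, gphi_eq, integral_div, integral_gaussian_Ioi, hπ]
  field_simp

lemma half_sub_mul_gphi_le_Phibar {x : ℝ} (hx : x ≤ 0) : 1 / 2 - x * gphi x ≤ Phibar x := by
  have hanti : Antitone fun y => Phibar y + y * gphi y :=
    antitone_of_hasDerivAt_nonpos (f' := fun y => -(y ^ 2 * gphi y))
      (fun y => ((hasDerivAt_Phibar y).add ((hasDerivAt_id y).mul (hasDerivAt_gphi y))).congr_deriv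
        (by simp only [id]; ring))
      fun y => neg_nonpos.2 (by have := gphi_pos y; positivity)
  have := hanti hx
  simp only [zero_mul, add_zero, Phibar_zero] at this
  linarith

lemma pos_of_hasDerivAt_neg_of_tendsto_zero {f f' : ℝ → ℝ} {x : ℝ}
    (hf : ∀ y ∈ Ici x, HasDerivAt f (f' y) y) (hf' : ∀ y ∈ Ici x, f' y < 0)
    (hlim : Tendsto f atTop (𝓝 0)) : 0 < f x := by
  have hanti : StrictAntiOn f (Ici x) :=
    strictAntiOn_of_hasDerivWithinAt_neg (convex_Ici x)
      (fun y hy => (hf y hy).continuousAt.continuousWithinAt)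
      (fun y hy => (hf y (interior_subset hy)).hasDerivWithinAt)
      (fun y hy => hf' y (interior_subset hy))
  have hx1 : x + 1 ∈ Ici x := by simp
  have hlim_le : 0 ≤ f (x + 1) := by
    refine le_of_tendsto hlim ?_
    filter_upwards [eventually_ge_atTop (x + 1)] with y hy
    exact hanti.antitoneOn hx1 (hx1.out.trans hy) hy
  linarith [hanti self_mem_Ici hx1 (by linarith)]

section Comparison

variable {r r' : ℝ → ℝ} {x : ℝ}

lemma hasDerivAt_mul_gphi_sub_Phibar {y : ℝ} (hr : HasDerivAt r (r' y) y) :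
    HasDerivAt (fun z => r z * gphi z - Phibar z) ((r' y - y * r y + 1) * gphi y) y :=
  ((hr.mul (hasDerivAt_gphi y)).sub (hasDerivAt_Phibar y)).congr_deriv (by ring)

lemma tendsto_mul_gphi_sub_Phibar (hr : r =O[atTop] fun _ => (1 : ℝ)) :
    Tendsto (fun z => r z * gphi z - Phibar z) atTop (𝓝 0) := by
  have h : Tendsto (fun z => r z * gphi z) atTop (𝓝 0) :=
    (hr.mul (isBigO_refl gphi atTop)).trans_tendsto (by simpa using tendsto_gphi_atTop)
  simpa using h.sub tendsto_Phibar_atTop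

lemma Phibar_lt_mul_gphi (hr : ∀ y ∈ Ici x, HasDerivAt r (r' y) y)
    (hr' : ∀ y ∈ Ici x, r' y - y * r y + 1 < 0) (hbdd : r =O[atTop] fun _ => (1 : ℝ)) :
    Phibar x < r x * gphi x := by
  have h := pos_of_hasDerivAt_neg_of_tendsto_zero
    (fun y hy => hasDerivAt_mul_gphi_sub_Phibar (hr y hy))
    (fun y hy => mul_neg_of_neg_of_pos (hr' y hy) (gphi_pos y)) (tendsto_mul_gphi_sub_Phibar hbdd)
  linarith

lemma mul_gphi_lt_Phibar (hr : ∀ y ∈ Ici x, HasDerivAt r (r' y) y)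
    (hr' : ∀ y ∈ Ici x, 0 < r' y - y * r y + 1) (hbdd : r =O[atTop] fun _ => (1 : ℝ)) :
    r x * gphi x < Phibar x := by
  have h := pos_of_hasDerivAt_neg_of_tendsto_zero (f := fun z => -(r z * gphi z - Phibar z))
    (fun y hy => (hasDerivAt_mul_gphi_sub_Phibar (hr y hy)).neg)
    (fun y hy => neg_neg_of_pos (mul_pos (hr' y hy) (gphi_pos y)))
    (by simpa only [neg_zero] using (tendsto_mul_gphi_sub_Phibar hbdd).neg)
  linarith

end Comparison

lemma hasDerivAt_sqrt_sq_add {c : ℝ} (hc : 0 < c) (y : ℝ) :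
    HasDerivAt (fun z => √(z ^ 2 + c)) (y / √(y ^ 2 + c)) y := by
  have h := ((hasDerivAt_pow 2 y).add_const c).sqrt (by positivity)
  exact h.congr_deriv (by field_simp; norm_num)

lemma birnbaum_mul_gphi_lt_Phibar (x : ℝ) : (√(x ^ 2 + 4) - x) / 2 * gphi x < Phibar x := by
  refine mul_gphi_lt_Phibar (r := fun y => (√(y ^ 2 + 4) - y) / 2)
    (r' := fun y => (y / √(y ^ 2 + 4) - 1) / 2)
    (fun y _ => ((hasDerivAt_sqrt_sq_add four_pos y).sub (hasDerivAt_id y)).div_const 2)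
    (fun y _ => ?_) ?_
  · have ht : 0 < √(y ^ 2 + 4) := by positivity
    have ht2 : √(y ^ 2 + 4) ^ 2 = y ^ 2 + 4 := sq_sqrt (by positivity)
    -- `((1 + y²) t)² - (y³ + 3y)² = 4` for `t = √(y² + 4)`
    have hmain : y ^ 3 + 3 * y < (1 + y ^ 2) * √(y ^ 2 + 4) :=
      (le_abs_self _).trans_lt <|
        abs_lt_of_sq_lt_sq (by rw [mul_pow, ht2]; nlinarith) (by positivity)
    have hexpand : (y / √(y ^ 2 + 4) - 1) / 2 - y * ((√(y ^ 2 + 4) - y) / 2) + 1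
        = ((1 + y ^ 2) * √(y ^ 2 + 4) - (y ^ 3 + 3 * y)) / (2 * √(y ^ 2 + 4)) := by
      field_simp
      linear_combination (-y) * ht2
    rw [hexpand]
    exact div_pos (by linarith) (by positivity)
  · refine IsBigO.of_bound 1 ?_
    filter_upwards [eventually_ge_atTop 0] with y hy
    have ht2 : √(y ^ 2 + 4) ^ 2 = y ^ 2 + 4 := sq_sqrt (by positivity)
    have hlo : y ≤ √(y ^ 2 + 4) := by nlinarith [sqrt_nonneg (y ^ 2 + 4)]
    have hhi : √(y ^ 2 + 4) ≤ y + 2 := by nlinarith [sqrt_nonneg (y ^ 2 + 4)]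
    rw [norm_one, mul_one, Real.norm_eq_abs, abs_le]
    constructor <;> linarith

lemma boyd_Phibar_lt_mul_gphi {x : ℝ} (hx : -1 < x) :
    Phibar x < 4 / (3 * x + √(x ^ 2 + 8)) * gphi x := by
  have hden {y : ℝ} (hy : x ≤ y) : 0 < 3 * y + √(y ^ 2 + 8) := by
    have hs2 : √(y ^ 2 + 8) ^ 2 = y ^ 2 + 8 := sq_sqrt (by positivity)
    nlinarith [sqrt_nonneg (y ^ 2 + 8)]
  refine Phibar_lt_mul_gphi (r := fun y => 4 / (3 * y + √(y ^ 2 + 8)))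
    (r' := fun y => (0 * (3 * y + √(y ^ 2 + 8)) - 4 * (3 + y / √(y ^ 2 + 8)))
      / (3 * y + √(y ^ 2 + 8)) ^ 2)
    (fun y hy => (hasDerivAt_const y 4).div
      (((hasDerivAt_id y).const_mul 3).add (hasDerivAt_sqrt_sq_add (by norm_num) y)
        |>.congr_deriv (by simp))
      (hden hy).ne')
    (fun y hy => ?_) ?_
  · have hs : 0 < √(y ^ 2 + 8) := by positivity
    have hs2 : √(y ^ 2 + 8) ^ 2 = y ^ 2 + 8 := sq_sqrt (by positivity)
    have hD := hden hy
    -- `((y² + 2) s)² - (y³ + 6y)² = 32` for `s = √(y² + 8)`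
    have hmain : y ^ 3 + 6 * y < (y ^ 2 + 2) * √(y ^ 2 + 8) :=
      (le_abs_self _).trans_lt <|
        abs_lt_of_sq_lt_sq (by rw [mul_pow, hs2]; nlinarith) (by positivity)
    have hexpand : (0 * (3 * y + √(y ^ 2 + 8)) - 4 * (3 + y / √(y ^ 2 + 8)))
          / (3 * y + √(y ^ 2 + 8)) ^ 2 - y * (4 / (3 * y + √(y ^ 2 + 8))) + 1
        = 2 * ((y ^ 3 + 6 * y) - (y ^ 2 + 2) * √(y ^ 2 + 8))
          / (√(y ^ 2 + 8) * (3 * y + √(y ^ 2 + 8)) ^ 2) := by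
      field_simp
      linear_combination (√(y ^ 2 + 8) + 2 * y) * hs2
    rw [hexpand]
    exact div_neg_of_neg_of_pos (by linarith) (by positivity)
  · refine IsBigO.of_bound 2 ?_
    filter_upwards [eventually_ge_atTop 0] with y hy
    have hs2 : √(y ^ 2 + 8) ^ 2 = y ^ 2 + 8 := sq_sqrt (by positivity)
    have hs : 2 ≤ √(y ^ 2 + 8) := by nlinarith [sqrt_nonneg (y ^ 2 + 8)]
    rw [norm_one, mul_one, Real.norm_eq_abs, abs_of_pos (by positivity),
      div_le_iff₀ (by positivity)]
    linarith

lemma gaussE_pos (x : ℝ) : 0 < gaussE x := div_pos (gphi_pos x) (Phibar_pos x)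

lemma gaussE_mul_sub_lt_one (x : ℝ) : gaussE x * (gaussE x - x) < 1 := by
  have ht2 : √(x ^ 2 + 4) ^ 2 = x ^ 2 + 4 := sq_sqrt (by positivity)
  have hxt : |x| < √(x ^ 2 + 4) := abs_lt_of_sq_lt_sq (by linarith) (sqrt_nonneg _)
  have hE := gaussE_pos x
  have hbirnbaum : (√(x ^ 2 + 4) - x) / 2 * gaussE x < 1 := by
    rw [gaussE, ← mul_div_assoc, div_lt_one (Phibar_pos x)]
    exact birnbaum_mul_gphi_lt_Phibar x
  obtain ⟨hxt₁, hxt₂⟩ := abs_lt.1 hxt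
  -- `(√(x² + 4) - x)(√(x² + 4) + x) = 4` turns the Birnbaum bound into `|2𝓔 - x| < √(x² + 4)`
  have hupper : 2 * gaussE x - x < √(x ^ 2 + 4) := by nlinarith
  nlinarith

lemma boyd_lt_gaussE {x : ℝ} (hx : -1 < x) : (3 * x + √(x ^ 2 + 8)) / 4 < gaussE x := by
  have hs2 : √(x ^ 2 + 8) ^ 2 = x ^ 2 + 8 := sq_sqrt (by positivity)
  have hD : 0 < 3 * x + √(x ^ 2 + 8) := by nlinarith [sqrt_nonneg (x ^ 2 + 8)]
  have h := boyd_Phibar_lt_mul_gphi hx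
  rw [div_mul_eq_mul_div, lt_div_iff₀ hD] at h
  rw [gaussE, lt_div_iff₀ (Phibar_pos x)]
  linarith

lemma lt_gaussE (x : ℝ) : x < gaussE x := by
  rcases le_or_gt x 0 with hx | hx
  · exact hx.trans_lt (gaussE_pos x)
  · have hs : x < √(x ^ 2 + 8) := lt_sqrt_of_sq_lt (by linarith)
    linarith [boyd_lt_gaussE (by linarith : -1 < x)]

lemma one_lt_two_mul_gaussE_sub_mul (x : ℝ) : 1 < (2 * gaussE x - x) * (gaussE x - x) := by
  have hE := gaussE_pos x
  rcases le_or_gt x (-1) with hx | hx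
  · nlinarith
  · have hs2 : √(x ^ 2 + 8) ^ 2 = x ^ 2 + 8 := sq_sqrt (by positivity)
    have hboyd := boyd_lt_gaussE hx
    -- `(4𝓔 - 3x)² > x² + 8` is the claim multiplied by 8
    nlinarith [sqrt_nonneg (x ^ 2 + 8)]

lemma gaussE_le_inv_of_nonpos {x : ℝ} (hx : x ≤ 0) :
    gaussE x ≤ (5 / 4 * (1 + x ^ 2 / 2 + x ^ 4 / 8) - x)⁻¹ := by
  have hP : 0 < 5 / 4 * (1 + x ^ 2 / 2 + x ^ 4 / 8) - x := by
    nlinarith [sq_nonneg x, sq_nonneg (x ^ 2)]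
  have hlow : (5 / 4 * (1 + x ^ 2 / 2 + x ^ 4 / 8) - x) * gphi x ≤ Phibar x := by
    nlinarith [taylor_mul_gphi_le_one x, half_sub_mul_gphi_le_Phibar hx]
  rw [gaussE, div_le_iff₀ (Phibar_pos x), le_inv_mul_iff₀ hP]
  exact hlow

lemma mul_bracket_le_of_le {x e c : ℝ} (he : 0 < e) (hxe : x < e) (hec : e ≤ c)
    (hbr : 1 < (2 * e - x) * (e - x)) :
    e * ((2 * e - x) * (e - x) - 1) ≤ c * ((2 * c - x) * (c - x) - 1) ∧
      (2 * e - x) * (e * ((2 * e - x) * (e - x) - 1))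
        ≤ (2 * c - x) * (c * ((2 * c - x) * (c - x) - 1)) := by
  have hbr_le : (2 * e - x) * (e - x) ≤ (2 * c - x) * (c - x) :=
    mul_le_mul (by linarith) (by linarith) (by linarith) (by linarith)
  have hmul : e * ((2 * e - x) * (e - x) - 1) ≤ c * ((2 * c - x) * (c - x) - 1) :=
    mul_le_mul hec (by linarith) (by linarith) (by linarith)
  exact ⟨hmul, mul_le_mul (by linarith) hmul (mul_pos he (by linarith)).le (by linarith)⟩

lemma inv_poly_mul_bracket_lt {x c : ℝ} (hx : x ≤ 0)
    (hc : c = (5 / 4 * (1 + x ^ 2 / 2 + x ^ 4 / 8) - x)⁻¹) :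
    c * ((2 * c - x) * (c - x) - 1) < 1 ∧
      (2 * c - x) * (c * ((2 * c - x) * (c - x) - 1)) < 13 := by
  obtain ⟨a, ha, rfl⟩ : ∃ a, 0 ≤ a ∧ x = -a := ⟨-x, by linarith, by ring⟩
  set P := 5 / 4 + a + 5 / 8 * a ^ 2 + 5 / 32 * a ^ 4 with hP_def
  have hP : 0 < P := by positivity
  rw [show 5 / 4 * (1 + (-a) ^ 2 / 2 + (-a) ^ 4 / 8) - -a = P by ring] at hc
  subst hc
  have hsecond : P⁻¹ * ((2 * P⁻¹ - -a) * (P⁻¹ - -a) - 1)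
      = ((2 + a * P) * (1 + a * P) - P ^ 2) / P ^ 3 := by
    field_simp; ring
  have hthird : (2 * P⁻¹ - -a) * (P⁻¹ * ((2 * P⁻¹ - -a) * (P⁻¹ - -a) - 1))
      = (2 + a * P) * ((2 + a * P) * (1 + a * P) - P ^ 2) / P ^ 4 := by
    field_simp; ring
  constructor
  · rw [hsecond, div_lt_one (by positivity), ← sub_pos, hP_def]
    ring_nf
    positivity
  · rw [hthird, div_lt_iff₀ (by positivity)]
    -- the only negative coefficient, that of `a ^ 15`, is absorbed by `a ^ 14 (a - 1) ^ 2`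
    have hsq : 0 ≤ a ^ 14 * (a - 1) ^ 2 := by positivity
    have hrest : 0 < 13 * P ^ 4 - (2 + a * P) * ((2 + a * P) * (1 + a * P) - P ^ 2)
        - 8125 / 1048576 * (a ^ 14 * (a - 1) ^ 2) := by
      rw [hP_def]
      ring_nf
      positivity
    linarith

lemma gaussE_mul_bracket_lt (x : ℝ) :
    gaussE x * ((2 * gaussE x - x) * (gaussE x - x) - 1) < 1 ∧
      (2 * gaussE x - x) * (gaussE x * ((2 * gaussE x - x) * (gaussE x - x) - 1)) < 13 := by
  have hE := gaussE_pos x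
  have hxE := lt_gaussE x
  have h₁ := gaussE_mul_sub_lt_one x
  rcases le_or_gt x 0 with hx | hx
  · obtain ⟨h₂, h₃⟩ := mul_bracket_le_of_le hE hxE (gaussE_le_inv_of_nonpos hx)
      (one_lt_two_mul_gaussE_sub_mul x)
    obtain ⟨h₂', h₃'⟩ := inv_poly_mul_bracket_lt hx rfl
    exact ⟨h₂.trans_lt h₂', h₃.trans_lt h₃'⟩
  · -- `𝓔'' = (2𝓔 - x)𝓔' - 𝓔 < 𝓔 - x < 1` by `𝓔' < 1`
    have hsub : gaussE x - x < 1 := by nlinarith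
    have hsecond : gaussE x * ((2 * gaussE x - x) * (gaussE x - x) - 1) < gaussE x - x := by
      nlinarith
    have hthird := mul_lt_mul_of_pos_left hsecond (by linarith : 0 < 2 * gaussE x - x)
    exact ⟨by linarith, by nlinarith⟩

lemma hasDerivAt_gaussE (x : ℝ) : HasDerivAt gaussE (gaussE x * (gaussE x - x)) x := by
  have h := (hasDerivAt_gphi x).div (hasDerivAt_Phibar x) (Phibar_pos x).ne'
  refine h.congr_deriv ?_
  have hP := (Phibar_pos x).ne'
  rw [gaussE]
  field_simp
  ring

lemma deriv_gaussE : deriv gaussE = fun x => gaussE x * (gaussE x - x) :=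
  funext fun x => (hasDerivAt_gaussE x).deriv

lemma iteratedDeriv_two_gaussE :
    iteratedDeriv 2 gaussE = fun x => gaussE x * ((2 * gaussE x - x) * (gaussE x - x) - 1) := by
  rw [iteratedDeriv_succ, iteratedDeriv_one, deriv_gaussE]
  funext x
  have h := (hasDerivAt_gaussE x).mul ((hasDerivAt_gaussE x).sub (hasDerivAt_id x))
  exact (h.congr_deriv (by simp only [Pi.sub_apply, id_eq]; ring)).deriv

lemma iteratedDeriv_three_gaussE :
    iteratedDeriv 3 gaussE = fun x =>
      -(2 * (1 - gaussE x * (gaussE x - x)) * (gaussE x * (gaussE x - x)))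
        + (2 * gaussE x - x) * (gaussE x * ((2 * gaussE x - x) * (gaussE x - x) - 1)) := by
  rw [iteratedDeriv_succ, iteratedDeriv_two_gaussE]
  funext x
  have hE := hasDerivAt_gaussE x
  have h := hE.mul
    ((((hE.const_mul 2).sub (hasDerivAt_id x)).mul (hE.sub (hasDerivAt_id x))).sub_const 1)
  exact (h.congr_deriv (by simp only [Pi.mul_apply, Pi.sub_apply, id_eq]; ring)).deriv

/-- Lemma 9.1. Properties of `𝓔(x) = φ(x)/Φ̄(x)`:
(a) `max{0,x} < 𝓔(x) < 1 + |x|`; (b) `𝓔'(x) = 𝓔(x)(𝓔(x) - x) ∈ (0,1)`;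
(c) `𝓔''(x) = 𝓔(x)((2𝓔(x) - x)(𝓔(x) - x) - 1) ∈ (0,1)`;
(d) `𝓔'''(x) = -2(1 - 𝓔'(x))𝓔'(x) + (2𝓔(x) - x)𝓔''(x) ∈ (-1/2, 13)`. -/
theorem gaussE_derivative_bounds (x : ℝ) :
    (max 0 x < gaussE x ∧ gaussE x < 1 + |x|) ∧
    (deriv gaussE x = gaussE x * (gaussE x - x) ∧ deriv gaussE x ∈ Set.Ioo (0 : ℝ) 1) ∧
    (iteratedDeriv 2 gaussE x = gaussE x * ((2 * gaussE x - x) * (gaussE x - x) - 1) ∧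
      iteratedDeriv 2 gaussE x ∈ Set.Ioo (0 : ℝ) 1) ∧
    (iteratedDeriv 3 gaussE x
        = -(2 * (1 - deriv gaussE x) * deriv gaussE x)
          + (2 * gaussE x - x) * iteratedDeriv 2 gaussE x ∧
      iteratedDeriv 3 gaussE x ∈ Set.Ioo (-(1/2) : ℝ) 13) := by
  have hE := gaussE_pos x
  have hxE := lt_gaussE x
  have h₁ := gaussE_mul_sub_lt_one x
  have hbr := one_lt_two_mul_gaussE_sub_mul x
  obtain ⟨h₂, h₃⟩ := gaussE_mul_bracket_lt x
  have h₂pos : 0 < gaussE x * ((2 * gaussE x - x) * (gaussE x - x) - 1) := by nlinarith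
  have h₁pos : 0 < gaussE x * (gaussE x - x) := by nlinarith
  rw [iteratedDeriv_three_gaussE, iteratedDeriv_two_gaussE, deriv_gaussE]
  refine ⟨⟨max_lt hE hxE, ?_⟩, ⟨rfl, h₁pos, h₁⟩, ⟨rfl, h₂pos, h₂⟩, ⟨rfl, ?_, ?_⟩⟩
  · rcases abs_cases x with ⟨hx, _⟩ | ⟨hx, _⟩ <;> nlinarith
  · nlinarith [sq_nonneg (1 - 2 * (gaussE x * (gaussE x - x)))]
  · nlinarith
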